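/- arXiv:1607.08601 — 2 statements merged into one kernel-verified Lean document; each statement's English description precedes it below -/
import Mathlib

section
/- With ν, π, B, Δ̃, μ as before and z_k as before, one has (1/μ_k²) tr( Δ̃^{-2} ν (diag(π) diag(μ)^{-1} diag(z_k)) 1 ν_kᵀ ) = (1/(π_k μ_k)) ∑_l B_{kl}(1−B_{kl}) B^{-1}_{kl}. -/
/-!
Writing `C = diag(π) diag(μ)⁻¹`, we have `Δ̃⁻¹ = ν⁻ᵀ C⁻¹ ν⁻¹`, so `Δ̃⁻² ν C = ν⁻ᵀ C⁻¹ B⁻¹` and the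
vector inside the trace is `ν⁻ᵀ C⁻¹ B⁻¹ z_k`. The trace of `M w ν_kᵀ` is `ν_kᵀ M w`, and
`ν_kᵀ ν⁻ᵀ = e_kᵀ`, so the left-hand side is `μ_k⁻² (μ_k / π_k) (B⁻¹ z_k)_k`. Both `ν` and `C`
are invertible since `det Δ̃ = (det ν)² det C ≠ 0`.
-/

open Matrix

namespace Matrix

variable {n R K : Type*} [Fintype n] [DecidableEq n]

section CommRing

variable [CommRing R]

theorem isUnit_det_mul_mul_transpose_iff {A C : Matrix n n R} :
    IsUnit (A * C * Aᵀ).det ↔ IsUnit A.det ∧ IsUnit C.det := by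
  rw [det_mul, det_mul, det_transpose, IsUnit.mul_iff, IsUnit.mul_iff]
  tauto

theorem inv_mul_mul_transpose_sq_mul {A C : Matrix n n R} (hA : IsUnit A.det)
    (hC : IsUnit C.det) :
    (A * C * Aᵀ)⁻¹ ^ 2 * (A * C) = Aᵀ⁻¹ * C⁻¹ * (Aᵀ * A)⁻¹ := by
  simp only [sq, mul_inv_rev, Matrix.mul_assoc]
  rw [← Matrix.mul_assoc A⁻¹ A, nonsing_inv_mul A hA, Matrix.one_mul, nonsing_inv_mul C hC,
    Matrix.mul_one]

theorem row_dotProduct_inv_mulVec {A : Matrix n n R} (hA : IsUnit A.det) (k : n)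
    (x : n → R) : A k ⬝ᵥ (A⁻¹ *ᵥ x) = x k := by
  change (A *ᵥ (A⁻¹ *ᵥ x)) k = x k
  rw [mulVec_mulVec, mul_nonsing_inv A hA, one_mulVec]

end CommRing

section Field

variable [Field K]

theorem ne_zero_of_isUnit_det_diagonal_mul_inv_diagonal {v w : n → K}
    (h : IsUnit (diagonal v * (diagonal w)⁻¹).det) : (∀ i, v i ≠ 0) ∧ ∀ i, w i ≠ 0 := by
  rw [det_mul, IsUnit.mul_iff, isUnit_nonsing_inv_det_iff, det_diagonal, det_diagonal] at h
  simpa only [isUnit_iff_ne_zero, Finset.prod_ne_zero_iff, Finset.mem_univ, true_imp_iff]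
    using h

theorem inv_diagonal_of_ne_zero {v : n → K} (hv : ∀ i, v i ≠ 0) :
    (diagonal v)⁻¹ = diagonal v⁻¹ := by
  refine inv_eq_right_inv ?_
  rw [diagonal_mul_diagonal, ← diagonal_one]
  exact congrArg diagonal (funext fun i => mul_inv_cancel₀ (hv i))

theorem inv_diagonal_mul_inv_diagonal {v w : n → K} (hv : ∀ i, v i ≠ 0) (hw : ∀ i, w i ≠ 0) :
    (diagonal v * (diagonal w)⁻¹)⁻¹ = diagonal (w / v) := by
  rw [inv_diagonal_of_ne_zero hw, diagonal_mul_diagonal, ← Pi.mul_def,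
    inv_diagonal_of_ne_zero (v := v * w⁻¹) fun i => mul_ne_zero (hv i) (inv_ne_zero (hw i))]
  simp only [mul_inv, inv_inv, div_eq_mul_inv, mul_comm]

end Field

end Matrix

theorem lse_within_block_variance_identity_cross_general {d : ℕ}
    (ν : Matrix (Fin d) (Fin d) ℝ)
    (π : Fin d → ℝ) (k : Fin d)
    (μ : Fin d → ℝ)
    (hΔ : IsUnit (ν * (Matrix.diagonal π * (Matrix.diagonal μ)⁻¹) * νᵀ).det) :
    let B := νᵀ * ν
    let Δt := ν * (Matrix.diagonal π * (Matrix.diagonal μ)⁻¹) * νᵀ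
    let z : Fin d → ℝ := fun l => B k l * (1 - B k l)
    let w : Fin d → ℝ :=
      (ν * (Matrix.diagonal π * (Matrix.diagonal μ)⁻¹ * Matrix.diagonal z)) *ᵥ
        (fun _ => 1)
    let νk : Fin d → ℝ := fun i => ν i k
    (1 / (μ k) ^ 2) * Matrix.trace ((Δt⁻¹) ^ 2 * Matrix.vecMulVec w νk) =
      (1 / (π k * μ k)) * ∑ l, B k l * (1 - B k l) * B⁻¹ k l := by
  intro B Δt z w νk
  obtain ⟨hν, hC⟩ := isUnit_det_mul_mul_transpose_iff.mp hΔ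
  obtain ⟨hπ, hμ⟩ := ne_zero_of_isUnit_det_diagonal_mul_inv_diagonal hC
  have hw : Δt⁻¹ ^ 2 *ᵥ w =
      νᵀ⁻¹ *ᵥ ((diagonal π * (diagonal μ)⁻¹)⁻¹ *ᵥ (B⁻¹ *ᵥ z)) := by
    have hz : diagonal z *ᵥ (fun _ => 1) = z :=
      funext fun l => (mulVec_diagonal z _ l).trans (mul_one _)
    rw [mulVec_mulVec, ← Matrix.mul_assoc ν, ← Matrix.mul_assoc,
      inv_mul_mul_transpose_sq_mul hν hC]
    simp only [← mulVec_mulVec, hz, B]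
  rw [mul_vecMulVec, trace_vecMulVec, hw, dotProduct_comm, show νk = νᵀ k from rfl,
    row_dotProduct_inv_mulVec (by rwa [det_transpose]) k, inv_diagonal_mul_inv_diagonal hπ hμ,
    mulVec_diagonal]
  simp only [Pi.div_apply, mulVec, dotProduct, Finset.mul_sum, z]
  refine Finset.sum_congr rfl fun l _ => ?_
  field_simp

/-- LSE within-block variance identity (cross term): with `B = νᵀν`,
`μ_k = ∑_l π_l B_{kl} > 0`, `Δ̃ = ν diag(π) diag(μ)⁻¹ νᵀ`, `z_k(l) = B_{kl}(1−B_{kl})`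
and `𝟙` the all-ones vector,
`(1/μ_k²) tr(Δ̃^{-2} ν (diag(π) diag(μ)^{-1} diag(z_k)) 𝟙 ν_kᵀ)
  = (1/(π_k μ_k)) ∑_l B_{kl}(1−B_{kl}) B^{-1}_{kl}`. -/
theorem lse_within_block_variance_identity_cross {d : ℕ}
    (ν : Matrix (Fin d) (Fin d) ℝ) (hν : IsUnit ν.det)
    (π : Fin d → ℝ) (hπ : ∀ l, 0 < π l) (k : Fin d)
    (μ : Fin d → ℝ) (hμdef : ∀ l, μ l = ∑ l', π l' * (νᵀ * ν) l l')
    (hμpos : ∀ l, 0 < μ l)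
    (hΔ : IsUnit (ν * (Matrix.diagonal π * (Matrix.diagonal μ)⁻¹) * νᵀ).det) :
    let B := νᵀ * ν
    let Δt := ν * (Matrix.diagonal π * (Matrix.diagonal μ)⁻¹) * νᵀ
    let z : Fin d → ℝ := fun l => B k l * (1 - B k l)
    let w : Fin d → ℝ :=
      (ν * (Matrix.diagonal π * (Matrix.diagonal μ)⁻¹ * Matrix.diagonal z)) *ᵥ
        (fun _ => 1)
    let νk : Fin d → ℝ := fun i => ν i k
    (1 / (μ k) ^ 2) * Matrix.trace ((Δt⁻¹) ^ 2 * Matrix.vecMulVec w νk) =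
      (1 / (π k * μ k)) * ∑ l, B k l * (1 - B k l) * B⁻¹ k l :=
  lse_within_block_variance_identity_cross_general ν π k μ hΔ
end

section
/- Let B = [[α, γ],[γ, δ]] be a symmetric invertible 2×2 matrix, π = (π₁, π₂) with π₁,π₂ > 0 and π₁+π₂=1, and let P = Z B Zᵀ with Z the n×2 indicator matrix with nπ₁ rows (1,0) and nπ₂ rows (0,1). Then n² tr( (P†)² diag(w) ) = tr( (diag(π)^{-1} B^{-1})² diag(α(1−α), δ(1−δ)) ), where diag(w) is the n×n diagonal matrix whose first nπ₁ diagonal entries are α(1−α) and whose remaining diagonal entries are δ(1−δ). -/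
/-!
Writing `Z` for the indicator matrix of a block assignment, both `ZᵀZ = diag(n₁, n₂)` and
`Zᵀ diag(w) Z = diag(n₁, n₂) diag(α(1-α), δ(1-δ))` are `2 × 2` diagonal matrices. Cycling the
trace turns `tr((Z D B⁻¹ D Zᵀ)² diag(w))` into a `2 × 2` trace in which `D = diag(n₁, n₂)⁻¹`
cancels both Gram matrices, leaving `tr((D B⁻¹)² diag(α(1-α), δ(1-δ)))`. Since
`diag(π)⁻¹ = n D`, this is the right-hand side divided by `n²`.
-/

open Matrix Finset

variable {ι κ : Type*} [Fintype ι] [DecidableEq ι] [DecidableEq κ]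

section Semiring

variable (R : Type*) [CommSemiring R]

def blockIndicator (g : ι → κ) : Matrix ι κ R :=
  of fun i j => if g i = j then 1 else 0

variable {R}

theorem blockIndicator_transpose_mul_diagonal_mul (g : ι → κ) (v : κ → R) :
    (blockIndicator R g)ᵀ * diagonal (v ∘ g) * blockIndicator R g =
      diagonal fun j => (#{i | g i = j} : R) * v j := by
  ext j j'
  rw [mul_apply]
  simp only [mul_diagonal, transpose_apply, blockIndicator, of_apply, Function.comp_apply]
  calc _ = ∑ i ∈ {i | g i = j}, diagonal v j j' := by
        rw [sum_filter]
        refine sum_congr rfl fun i _ => ?_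
        split_ifs <;> simp_all
    _ = _ := by simp [diagonal_apply, mul_comm]

theorem blockIndicator_transpose_mul_self (g : ι → κ) :
    (blockIndicator R g)ᵀ * blockIndicator R g = diagonal fun j => (#{i | g i = j} : R) := by
  simpa using blockIndicator_transpose_mul_diagonal_mul g (1 : κ → R)

end Semiring

section Field

variable [Fintype κ] {K : Type*} [Field K]

theorem trace_sq_mul_diagonal_of_gram {Z : Matrix ι κ K} {c v : κ → K} {w : ι → K}
    (hc : ∀ j, c j ≠ 0) (hZZ : Zᵀ * Z = diagonal c)
    (hZwZ : Zᵀ * diagonal w * Z = diagonal fun j => c j * v j) (M : Matrix κ κ K) :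
    trace ((Z * diagonal c⁻¹ * M * diagonal c⁻¹ * Zᵀ) ^ 2 * diagonal w) =
      trace ((diagonal c⁻¹ * M) ^ 2 * diagonal v) := by
  set D := diagonal c⁻¹
  have hDv : ∀ u : κ → K, D * diagonal (fun j => c j * u j) = diagonal u := fun u => by
    rw [diagonal_mul_diagonal]
    congr 1
    ext j
    exact inv_mul_cancel_left₀ (hc j) (u j)
  have hDc : D * diagonal c = 1 := by simpa using hDv 1
  calc trace ((Z * D * M * D * Zᵀ) ^ 2 * diagonal w)
      = trace (D * M * D * (Zᵀ * Z) * D * M * D * (Zᵀ * diagonal w * Z)) := by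
        simp only [sq, Matrix.mul_assoc]
        rw [trace_mul_comm Z]
        simp only [Matrix.mul_assoc]
    _ = trace ((D * M) ^ 2 * diagonal v) := by
        rw [hZZ, hZwZ]
        simp only [Matrix.mul_assoc, hDv, hDc, Matrix.mul_one, sq]

theorem inv_diagonal_div {c : κ → K} (hc : ∀ j, c j ≠ 0) {t : K} (ht : t ≠ 0) :
    (diagonal fun j => c j / t)⁻¹ = t • diagonal c⁻¹ := by
  refine inv_eq_left_inv ?_
  rw [smul_mul_assoc, diagonal_mul_diagonal, ← diagonal_smul, ← diagonal_one]
  congr 1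
  ext j
  simp only [Pi.smul_apply, Pi.inv_apply, smul_eq_mul]
  field_simp [hc j]

end Field

theorem two_block_trace_identity_general (n₁ n₂ : ℕ) (hn₁ : 0 < n₁) (hn₂ : 0 < n₂)
    (α γ δ : ℝ) :
    let n : ℕ := n₁ + n₂
    let π : Fin 2 → ℝ := ![(n₁ : ℝ) / n, (n₂ : ℝ) / n]
    let B : Matrix (Fin 2) (Fin 2) ℝ := !![α, γ; γ, δ]
    let Z : Matrix (Fin n) (Fin 2) ℝ := fun i j =>
      if (i : ℕ) < n₁ then (if j = 0 then 1 else 0) else (if j = 1 then 1 else 0)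
    let D : Matrix (Fin 2) (Fin 2) ℝ := Matrix.diagonal ![(n₁ : ℝ)⁻¹, (n₂ : ℝ)⁻¹]
    let Pdag : Matrix (Fin n) (Fin n) ℝ := Z * D * B⁻¹ * D * Zᵀ
    let w : Fin n → ℝ := fun i =>
      if (i : ℕ) < n₁ then α * (1 - α) else δ * (1 - δ)
    (n : ℝ) ^ 2 * Matrix.trace (Pdag ^ 2 * Matrix.diagonal w) =
      Matrix.trace (((Matrix.diagonal π)⁻¹ * B⁻¹) ^ 2 *
        Matrix.diagonal ![α * (1 - α), δ * (1 - δ)]) := by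
  intro n π B Z D Pdag w
  set c : Fin 2 → ℝ := ![(n₁ : ℝ), n₂]
  set v : Fin 2 → ℝ := ![α * (1 - α), δ * (1 - δ)]
  set g : Fin n → Fin 2 := fun i => if (i : ℕ) < n₁ then 0 else 1
  have hc : ∀ j, c j ≠ 0 := by
    intro j; fin_cases j <;> simp [c, hn₁.ne', hn₂.ne']
  have hn : (n : ℝ) ≠ 0 := by positivity
  have hZ : Z = blockIndicator ℝ g := by
    ext i j; fin_cases j <;> by_cases h : (i : ℕ) < n₁ <;> simp [Z, g, blockIndicator, h]
  have hw : w = v ∘ g := by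
    ext i; by_cases h : (i : ℕ) < n₁ <;> simp [w, v, g, h]
  have hcard : ∀ j, (#{i | g i = j} : ℝ) = c j := by
    intro j; rw [card_filter, Fin.sum_univ_add]; fin_cases j <;> simp [c, g]
  have hD : D = diagonal c⁻¹ := congrArg diagonal (by ext j; fin_cases j <;> rfl)
  have hπ : (diagonal π)⁻¹ = (n : ℝ) • diagonal c⁻¹ := by
    rw [← inv_diagonal_div hc hn]; congr 1; ext j; fin_cases j <;> rfl
  have hZZ : Zᵀ * Z = diagonal c := by
    simpa [hZ, hcard] using blockIndicator_transpose_mul_self (R := ℝ) g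
  have hZwZ : Zᵀ * diagonal w * Z = diagonal fun j => c j * v j := by
    simpa [hZ, hw, hcard] using blockIndicator_transpose_mul_diagonal_mul g v
  rw [hπ, smul_mul_assoc, smul_pow, smul_mul_assoc, trace_smul, smul_eq_mul,
    ← trace_sq_mul_diagonal_of_gram hc hZZ hZwZ, ← hD]

/-- Two-block trace identity: with `Z` the block indicator matrix (`n₁ = nπ₁` rows
`(1,0)`, `n₂ = nπ₂` rows `(0,1)`), `B = [[α,γ],[γ,δ]]` invertible, `P = ZBZᵀ` and
`P†` its Moore–Penrose pseudoinverse (given explicitly),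
`n² tr((P†)² diag(w)) = tr((diag(π)⁻¹ B⁻¹)² diag(α(1−α), δ(1−δ)))`, where the
first `n₁` diagonal entries of `diag(w)` are `α(1−α)` and the rest are `δ(1−δ)`. -/
theorem two_block_trace_identity (n₁ n₂ : ℕ) (hn₁ : 0 < n₁) (hn₂ : 0 < n₂)
    (α γ δ : ℝ) (hB : IsUnit (Matrix.det !![α, γ; γ, δ])) :
    let n : ℕ := n₁ + n₂
    let π : Fin 2 → ℝ := ![(n₁ : ℝ) / n, (n₂ : ℝ) / n]
    let B : Matrix (Fin 2) (Fin 2) ℝ := !![α, γ; γ, δ]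
    let Z : Matrix (Fin n) (Fin 2) ℝ := fun i j =>
      if (i : ℕ) < n₁ then (if j = 0 then 1 else 0) else (if j = 1 then 1 else 0)
    let D : Matrix (Fin 2) (Fin 2) ℝ := Matrix.diagonal ![(n₁ : ℝ)⁻¹, (n₂ : ℝ)⁻¹]
    let Pdag : Matrix (Fin n) (Fin n) ℝ := Z * D * B⁻¹ * D * Zᵀ
    let w : Fin n → ℝ := fun i =>
      if (i : ℕ) < n₁ then α * (1 - α) else δ * (1 - δ)
    (n : ℝ) ^ 2 * Matrix.trace (Pdag ^ 2 * Matrix.diagonal w) =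
      Matrix.trace (((Matrix.diagonal π)⁻¹ * B⁻¹) ^ 2 *
        Matrix.diagonal ![α * (1 - α), δ * (1 - δ)]) :=
  two_block_trace_identity_general n₁ n₂ hn₁ hn₂ α γ δ
end
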